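/- Rotation distance is subadditive under splitting at any common edge: for trees S, T sharing a common edge and the induced pairs (S1,T1), (S2,T2), d_R(S,T) ≤ d_R(S1,T1) + d_R(S2,T2). -/

import Mathlib

inductive BT : Type
  | leaf : BT
  | node : BT → BT → BT
deriving DecidableEq

namespace BT

/-- number of internal nodes -/
def size : BT → ℕ
  | leaf => 0
  | node l r => size l + size r + 1

/-- number of leaves -/
def nl (t : BT) : ℕ := size t + 1

/-- one (right) rotation somewhere in the tree -/
inductive Rot : BT → BT → Prop
  | root (a b c : BT) : Rot (node (node a b) c) (node a (node b c))
  | congrL {l l' : BT} (r : BT) : Rot l l' → Rot (node l r) (node l' r)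
  | congrR (l : BT) {r r' : BT} : Rot r r' → Rot (node l r) (node l r')

/-- a rotation move: a right rotation or its inverse (a left rotation) -/
def Move (s t : BT) : Prop := Rot s t ∨ Rot t s

/-- `Chain n s t`: `s` is transformed into `t` by `n` rotation moves -/
inductive Chain : ℕ → BT → BT → Prop
  | refl (t : BT) : Chain 0 t t
  | step {n : ℕ} {s u t : BT} : Move s u → Chain n u t → Chain (n + 1) s t

/-- rotation distance -/
noncomputable def dR (s t : BT) : ℕ := sInf {n | Chain n s t}

def isNode : BT → Bool
  | leaf => false
  | node _ _ => true

/-- the multiset of leaf partitions induced by internal edges, where the leaves of the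
tree are numbered from `k` on, left to right; each internal edge is recorded by the
set of leaf numbers below it. -/
def iparts : BT → ℕ → Multiset (Finset ℕ)
  | leaf, _ => 0
  | node l r, k =>
      ((if isNode l then {Finset.Ico k (k + nl l)} else 0) + iparts l k)
        + ((if isNode r then {Finset.Ico (k + nl l) (k + nl l + nl r)} else 0)
            + iparts r (k + nl l))

/-- number of common edge pairs -/
def commonEdges (s t : BT) : ℕ := ((iparts s 0) ∩ (iparts t 0)).card

/-- replace the `i`-th leaf (numbered left to right from 0) of the first tree by the
second tree -/
def graft : BT → ℕ → BT → BT
  | leaf, 0, u => u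
  | leaf, _ + 1, _ => leaf
  | node l r, i, u =>
      if i < l.nl then node (graft l i u) r else node l (graft r (i - l.nl) u)


/-!
Grafting at a fixed leaf position commutes with rotations on either side: a rotation of the
outer tree keeps the number of leaves of every subtree, so the graft position stays a leaf,
and a rotation of the grafted tree is a rotation of the whole tree. Hence a geodesic from
`S1` to `T1` followed by a geodesic from `S2` to `T2` is a rotation sequence from the
first grafted tree to the second. Geodesics exist because any tree rotates to the right comb
of the same size.
-/

lemma nl_node (l r : BT) : (node l r).nl = l.nl + r.nl := by
  simp only [nl, size]; omega

lemma Rot.nl_eq {s t : BT} (h : Rot s t) : s.nl = t.nl := by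
  induction h with
  | root => simp only [nl_node]; omega
  | congrL r _ ih => simp only [nl_node, ih]
  | congrR l _ ih => simp only [nl_node, ih]

lemma Move.symm {s t : BT} (h : Move s t) : Move t s := Or.symm h

lemma Move.map {f : BT → BT} (hf : ∀ {s t}, Rot s t → Rot (f s) (f t)) {s t : BT}
    (h : Move s t) : Move (f s) (f t) :=
  h.imp hf hf

namespace Chain

lemma map {f : BT → BT} (hf : ∀ {s t}, Rot s t → Rot (f s) (f t)) {n : ℕ} {s t : BT}
    (h : Chain n s t) : Chain n (f s) (f t) := by
  induction h with
  | refl t => exact refl _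
  | step m _ ih => exact step (m.map hf) ih

lemma trans {m n : ℕ} {s u t : BT} (h₁ : Chain m s u) (h₂ : Chain n u t) :
    Chain (m + n) s t := by
  induction h₁ with
  | refl => simpa using h₂
  | step mv _ ih => simpa only [Nat.add_right_comm] using step mv (ih h₂)

lemma snoc {n : ℕ} {s u t : BT} (h : Chain n s u) (mv : Move u t) : Chain (n + 1) s t :=
  h.trans (step mv (refl t))

lemma symm {n : ℕ} {s t : BT} (h : Chain n s t) : Chain n t s := by
  induction h with
  | refl t => exact refl _
  | step mv _ ih => exact ih.snoc mv.symm

lemma congrL {n : ℕ} {l l' : BT} (r : BT) (h : Chain n l l') :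
    Chain n (node l r) (node l' r) :=
  h.map (Rot.congrL r)

lemma congrR {n : ℕ} (l : BT) {r r' : BT} (h : Chain n r r') :
    Chain n (node l r) (node l r') :=
  h.map (Rot.congrR l)

end Chain

def comb : ℕ → BT
  | 0 => leaf
  | n + 1 => node leaf (comb n)

lemma exists_chain_node_comb_comb (a b : ℕ) :
    ∃ n, Chain n (node (comb a) (comb b)) (comb (a + b + 1)) := by
  induction a with
  | zero => exact ⟨0, by simpa [comb] using Chain.refl (node leaf (comb b))⟩
  | succ a ih =>
    obtain ⟨n, hn⟩ := ih
    have rotate : Move (node (node leaf (comb a)) (comb b))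
        (node leaf (node (comb a) (comb b))) := Or.inl (Rot.root _ _ _)
    refine ⟨n + 1, ?_⟩
    rw [show a + 1 + b + 1 = a + b + 1 + 1 by omega]
    exact Chain.step rotate (hn.congrR leaf)

lemma exists_chain_comb (t : BT) : ∃ n, Chain n t (comb t.size) := by
  induction t with
  | leaf => exact ⟨0, Chain.refl _⟩
  | node l r ihl ihr =>
    obtain ⟨n₁, h₁⟩ := ihl
    obtain ⟨n₂, h₂⟩ := ihr
    obtain ⟨n₃, h₃⟩ := exists_chain_node_comb_comb l.size r.size
    exact ⟨n₁ + n₂ + n₃, ((h₁.congrL r).trans (h₂.congrR _)).trans h₃⟩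

lemma exists_chain_of_size_eq {s t : BT} (h : s.size = t.size) : ∃ n, Chain n s t := by
  obtain ⟨n₁, h₁⟩ := exists_chain_comb s
  obtain ⟨n₂, h₂⟩ := exists_chain_comb t
  rw [h] at h₁
  exact ⟨n₁ + n₂, h₁.trans h₂.symm⟩

lemma dR_le {n : ℕ} {s t : BT} (h : Chain n s t) : dR s t ≤ n :=
  Nat.sInf_le h

lemma chain_dR {s t : BT} (h : s.size = t.size) : Chain (dR s t) s t :=
  Nat.sInf_mem (exists_chain_of_size_eq h)

lemma Rot.graft_left {s s' : BT} (h : Rot s s') (i : ℕ) (u : BT) :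
    Rot (graft s i u) (graft s' i u) := by
  induction h generalizing i with
  | root a b c =>
    simp only [graft, nl_node, Nat.sub_sub]
    split_ifs <;> first | exact Rot.root _ _ _ | omega
  | congrL r h ih =>
    simp only [graft, h.nl_eq]
    split_ifs
    · exact Rot.congrL _ (ih i)
    · exact Rot.congrL _ h
  | congrR l h ih =>
    simp only [graft]
    split_ifs
    · exact Rot.congrR _ h
    · exact Rot.congrR _ (ih _)

lemma Rot.graft_right {u u' : BT} (h : Rot u u') {s : BT} {i : ℕ} (hi : i < s.nl) :
    Rot (graft s i u) (graft s i u') := by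
  induction s generalizing i with
  | leaf =>
    obtain rfl : i = 0 := by simpa [nl, size] using hi
    exact h
  | node l r ihl ihr =>
    rw [nl_node] at hi
    simp only [graft]
    split_ifs with hl
    · exact Rot.congrL _ (ihl hl)
    · exact Rot.congrR _ (ihr (by omega))

theorem dR_subadditive_split_general (S1 T1 S2 T2 : BT) (i : ℕ)
    (hsz1 : S1.size = T1.size) (hi : i < S1.nl) (hsz2 : S2.size = T2.size) :
    dR (graft S1 i S2) (graft T1 i T2) ≤ dR S1 T1 + dR S2 T2 := by
  have hiT : i < T1.nl := by simpa only [nl, hsz1] using hi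
  have outer : Chain (dR S1 T1) (graft S1 i S2) (graft T1 i S2) :=
    (chain_dR hsz1).map (Rot.graft_left · i S2)
  have inner : Chain (dR S2 T2) (graft T1 i S2) (graft T1 i T2) :=
    (chain_dR hsz2).map (Rot.graft_right · hiT)
  exact dR_le (outer.trans inner)

theorem dR_subadditive_split (S1 T1 S2 T2 : BT) (i : ℕ)
    (hsz1 : S1.size = T1.size) (hi : i < S1.nl) (hsz2 : S2.size = T2.size)
    (hS2 : S2 ≠ leaf) (hT2 : T2 ≠ leaf) :
    dR (graft S1 i S2) (graft T1 i T2) ≤ dR S1 T1 + dR S2 T2 :=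
  dR_subadditive_split_general S1 T1 S2 T2 i hsz1 hi hsz2

end BT
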